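/- arXiv:1310.5763 — 11 statements merged into one kernel-verified Lean document; each statement's English description precedes it below -/
import Mathlib

section
/- If a collection of sets Ω₁,…,Ω_m in a normed space is uniformly [q]-regular at a common point x̄, then it is [q]-subregular at x̄. -/
variable {X : Type*} [NormedAddCommGroup X] [NormedSpace ℝ X]

/-- `[q]`-subregularity of the collection `Ω` at `x₀`. -/
def SubReg {m : ℕ} (q : ℝ) (Ω : Fin m → Set X) (x₀ : X) : Prop :=
  ∃ α > (0:ℝ), ∃ δ > (0:ℝ), ∀ ρ ∈ Set.Ioo (0:ℝ) δ, ∀ y ∈ Metric.closedBall x₀ δ,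
    (∀ i, ∃ w ∈ Ω i, ‖y - w‖ ≤ (α * ρ) ^ (1 / q)) →
    ∃ z, (∀ i, z ∈ Ω i) ∧ ‖y - z‖ ≤ ρ

/-- Uniform `[q]`-regularity of the collection `Ω` at `x₀`. -/
def UnifReg {m : ℕ} (q : ℝ) (Ω : Fin m → Set X) (x₀ : X) : Prop :=
  ∃ α > (0:ℝ), ∃ δ > (0:ℝ), ∀ ρ ∈ Set.Ioo (0:ℝ) δ, ∀ ω x : Fin m → X,
    (∀ i, ω i ∈ Ω i ∧ ω i ∈ Metric.closedBall x₀ δ) →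
    (∀ i, ‖x i‖ ≤ (α * ρ) ^ (1 / q)) →
    ∃ z, ‖z‖ ≤ ρ ∧ ∀ i, z + ω i + x i ∈ Ω i

theorem exists_pos_forall_rpow_one_div_le {q α ε : ℝ} (hq : 0 < q) (hα : 0 < α) (hε : 0 < ε) :
    ∃ δ > 0, δ ≤ ε ∧ ∀ ρ ∈ Set.Icc 0 δ, (α * ρ) ^ (1 / q) ≤ ε := by
  refine ⟨min ε (ε ^ q / α), lt_min hε (by positivity), min_le_left _ _, fun ρ hρ => ?_⟩
  rw [one_div, Real.rpow_inv_le_iff_of_pos (mul_nonneg hα.le hρ.1) hε.le hq]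
  exact (le_div_iff₀' hα).1 (hρ.2.trans (min_le_right _ _))

theorem unifReg_implies_subReg_general {m : ℕ} (q : ℝ) (hq0 : 0 < q)
    (Ω : Fin m → Set X) (x₀ : X)
    (h : UnifReg q Ω x₀) : SubReg q Ω x₀ := by
  obtain ⟨α, hα, δ, hδ, H⟩ := h
  obtain ⟨δ', hδ', hδ'δ, hrad⟩ := exists_pos_forall_rpow_one_div_le hq0 hα (half_pos hδ)
  refine ⟨α, hα, δ', hδ', fun ρ hρ y hy hnear => ?_⟩
  choose w hwΩ hwy using hnear
  have hw : ∀ i, w i ∈ Ω i ∧ w i ∈ Metric.closedBall x₀ δ := by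
    refine fun i => ⟨hwΩ i, ?_⟩
    rw [Metric.mem_closedBall] at hy ⊢
    calc dist (w i) x₀ ≤ dist y (w i) + dist y x₀ := dist_triangle_left _ _ _
      _ ≤ δ / 2 + δ / 2 := by
        rw [dist_eq_norm]
        gcongr
        exacts [(hwy i).trans (hrad ρ (Set.Ioo_subset_Icc_self hρ)), hy.trans hδ'δ]
      _ = δ := add_halves δ
  -- Perturbing each `w i` by `y - w i` moves all of them to `y`.
  obtain ⟨z, hz, hzΩ⟩ := H ρ ⟨hρ.1, by linarith [hρ.2]⟩ w (fun i => y - w i) hw hwy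
  refine ⟨z + y, fun i => by simpa using hzΩ i, by simpa using hz⟩

theorem unifReg_implies_subReg {m : ℕ} (q : ℝ) (hq0 : 0 < q) (hq1 : q ≤ 1)
    (Ω : Fin m → Set X) (x₀ : X) (hx₀ : ∀ i, x₀ ∈ Ω i)
    (h : UnifReg q Ω x₀) : SubReg q Ω x₀ :=
  unifReg_implies_subReg_general q hq0 Ω x₀ h
end

section
/- Let Ω₁,…,Ω_m be closed subsets of a normed space, x̄ ∈ ⋂ᵢ Ωᵢ, and q > 1. If the collection is [q]-subregular at x̄, then x̄ is an interior point of ⋂ᵢ Ωᵢ. -/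
variable {X : Type*} [NormedAddCommGroup X] [NormedSpace ℝ X]

/-!
Write `S = ⋂ i, Ω i` and `d = infDist · S`. Subregularity with `ρ = s ^ q / α` turns `d y < s` into
`α * d y ≤ s ^ q`; letting `s ↓ d y` gives `α * d y ≤ d y ^ q`. Since `q > 1`, this forces `d y = 0`
as soon as `d y ^ (q - 1) < α`, which holds for all `y` close to `x₀`; as `S` is closed, a whole
ball around `x₀` lies in `S`.
-/

open Metric Set Filter Topology

lemma eq_zero_of_eventually_mul_le_rpow {α q t : ℝ} (hq : 1 < q) (ht : 0 ≤ t)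
    (hsmall : t ^ (q - 1) < α) (h : ∀ᶠ s in 𝓝[>] t, α * t ≤ s ^ q) : t = 0 := by
  have hlim : α * t ≤ t ^ q :=
    ge_of_tendsto (((Real.continuousAt_rpow_const t q (Or.inr (by linarith))).tendsto).mono_left
      nhdsWithin_le_nhds) h
  by_contra ht0
  have htpos : 0 < t := ht.lt_of_ne' ht0
  have : t ^ q < α * t := by
    calc t ^ q = t ^ (q - 1) * t := by
          rw [Real.rpow_sub_one htpos.ne', div_mul_cancel₀ _ htpos.ne']
      _ < α * t := mul_lt_mul_of_pos_right hsmall htpos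
  linarith

section

variable {E : Type*} [NormedAddCommGroup E] {m : ℕ} {q : ℝ} {Ω : Fin m → Set E} {x₀ : E}

lemma SubReg.exists_mul_infDist_le_rpow (hq : 0 < q) (hx₀ : ∀ i, x₀ ∈ Ω i)
    (h : SubReg q Ω x₀) :
    ∃ α > 0, ∃ ε > 0, ∀ y ∈ closedBall x₀ ε, ∀ s < ε,
      infDist y (⋂ i, Ω i) < s → α * infDist y (⋂ i, Ω i) ≤ s ^ q := by
  obtain ⟨α, hα, δ, hδ, hreg⟩ := h
  refine ⟨α, hα, min δ ((α * δ) ^ (1 / q)), by positivity, fun y hy s hsε hys => ?_⟩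
  have hs : 0 < s := infDist_nonneg.trans_lt hys
  have hradius : (α * (s ^ q / α)) ^ (1 / q) = s := by
    rw [mul_div_cancel₀ _ hα.ne', ← Real.rpow_mul hs.le, mul_one_div_cancel hq.ne',
      Real.rpow_one]
  have hρδ : s ^ q / α < δ := by
    rw [div_lt_iff₀ hα, mul_comm]
    calc s ^ q < ((α * δ) ^ (1 / q)) ^ q :=
          Real.rpow_lt_rpow hs.le (hsε.trans_le (min_le_right _ _)) hq
      _ = α * δ := by
          rw [← Real.rpow_mul (by positivity), one_div_mul_cancel hq.ne', Real.rpow_one]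
  obtain ⟨z, hz, hyz⟩ := hreg (s ^ q / α) ⟨by positivity, hρδ⟩ y
    (closedBall_subset_closedBall (min_le_left _ _) hy) fun i => by
      obtain ⟨w, hw, hyw⟩ := (infDist_lt_iff ⟨x₀, mem_iInter.2 hx₀⟩).1 hys
      exact ⟨w, mem_iInter.1 hw i, by rw [hradius, ← dist_eq_norm]; exact hyw.le⟩
  calc α * infDist y (⋂ i, Ω i) ≤ α * (s ^ q / α) :=
        mul_le_mul_of_nonneg_left
          ((infDist_le_dist_of_mem (mem_iInter.2 hz)).trans (dist_eq_norm y z ▸ hyz)) hα.le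
    _ = s ^ q := mul_div_cancel₀ _ hα.ne'

end

theorem subReg_gt_one_implies_interior {m : ℕ} (q : ℝ) (hq : 1 < q)
    (Ω : Fin m → Set X) (hΩ : ∀ i, IsClosed (Ω i)) (x₀ : X) (hx₀ : ∀ i, x₀ ∈ Ω i)
    (h : SubReg q Ω x₀) : x₀ ∈ interior (⋂ i, Ω i) := by
  obtain ⟨α, hα, ε, hε, hreg⟩ := h.exists_mul_infDist_le_rpow (by linarith) hx₀
  have hx₀S : x₀ ∈ ⋂ i, Ω i := mem_iInter.2 hx₀
  set r := min ε (α ^ (q - 1)⁻¹)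
  refine mem_interior.2 ⟨ball x₀ r, fun y hy => ?_, isOpen_ball, mem_ball_self (by positivity)⟩
  have htr : infDist y (⋂ i, Ω i) < r := (infDist_le_dist_of_mem hx₀S).trans_lt hy
  have hsmall : infDist y (⋂ i, Ω i) ^ (q - 1) < α := by
    calc infDist y (⋂ i, Ω i) ^ (q - 1) < (α ^ (q - 1)⁻¹) ^ (q - 1) :=
          Real.rpow_lt_rpow infDist_nonneg (htr.trans_le (min_le_right _ _)) (by linarith)
      _ = α := Real.rpow_inv_rpow hα.le (by linarith)
  have hself : ∀ᶠ s in 𝓝[>] infDist y (⋂ i, Ω i), α * infDist y (⋂ i, Ω i) ≤ s ^ q := by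
    filter_upwards [Ioo_mem_nhdsGT (htr.trans_le (min_le_left _ _))] with s hs
    exact hreg y (ball_subset_closedBall (ball_subset_ball (min_le_left _ _) hy)) s hs.2 hs.1
  rw [(isClosed_iInter hΩ).mem_iff_infDist_zero ⟨x₀, hx₀S⟩]
  exact eq_zero_of_eventually_mul_le_rpow hq infDist_nonneg hsmall hself
end

section
/- Let Ω₁,…,Ω_m be closed subsets of a normed space, x̄ ∈ ⋂ᵢ Ωᵢ, and q > 1. Suppose the collection is [q]-semiregular at x̄ and for every i with x̄ ∈ bd Ωᵢ the set of primal proximal normals N^P_{Ωᵢ}(x̄) := {u ∈ X ∣ ∃ r > 0, d(x̄ + ru, Ωᵢ) = r‖u‖} contains a nonzero element. Then x̄ ∈ int ⋂ᵢ Ωᵢ. -/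
/-!
Semiregularity with zero translations puts `x₀` in the closure of every `Ωᵢ`, so if `x₀` were
not interior to `Ωᵢ` it would be a boundary point with a nonzero proximal normal `u`. Along the
ray `x₀ + t • u` the distance to `Ωᵢ` then grows linearly, `d(x₀ + t • u, Ωᵢ) ≥ t‖u‖`, whereas
semiregularity, applied to a translation of `Ωᵢ` alone by the vector `t • u` of length
`(αρ)^(1/q)`, bounds the same distance by `ρ`. Since `q > 1`, `(αρ)^(1/q) > ρ` for small `ρ`.
-/

open Filter Metric Topology

variable {X : Type*} [NormedAddCommGroup X] [NormedSpace ℝ X]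

def SemiReg {m : ℕ} (q : ℝ) (Ω : Fin m → Set X) (x₀ : X) : Prop :=
  ∃ α > (0:ℝ), ∃ δ > (0:ℝ), ∀ ρ ∈ Set.Ioo (0:ℝ) δ, ∀ x : Fin m → X,
    (∀ i, ‖x i‖ ≤ (α * ρ) ^ (1 / q)) →
    ∃ y ∈ Metric.closedBall x₀ ρ, ∀ i, y + x i ∈ Ω i

/-- The set of primal proximal normals to `Ω` at `x₀`. -/
def ProxNormal (Ω : Set X) (x₀ : X) : Set X :=
  {u : X | ∃ r > (0:ℝ), Metric.infDist (x₀ + r • u) Ω = r * ‖u‖}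

theorem mul_norm_le_infDist_add_smul {Ω : Set X} {x₀ u : X} {r t : ℝ}
    (hr : infDist (x₀ + r • u) Ω = r * ‖u‖) (htr : t ≤ r) :
    t * ‖u‖ ≤ infDist (x₀ + t • u) Ω := by
  have hdist : dist (x₀ + r • u) (x₀ + t • u) = (r - t) * ‖u‖ := by
    rw [dist_add_left, dist_eq_norm, ← sub_smul, norm_smul, Real.norm_of_nonneg (by linarith)]
  have := infDist_le_infDist_add_dist (s := Ω) (x := x₀ + r • u) (y := x₀ + t • u)
  rw [hr, hdist] at this
  linarith

theorem eventually_lt_mul_rpow {q α : ℝ} (hq : 1 < q) (hα : 0 < α) :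
    ∀ᶠ ρ in 𝓝[>] (0 : ℝ), ρ < (α * ρ) ^ (1 / q) := by
  have hexp : 0 < 1 - 1 / q := by
    rw [sub_pos, div_lt_one (by linarith)]; exact hq
  have hsmall : ∀ᶠ ρ in 𝓝[>] (0 : ℝ), ρ ^ (1 - 1 / q) < α ^ (1 / q) := by
    have hcont := Real.continuousAt_rpow_const 0 _ (Or.inr hexp.le)
    rw [ContinuousAt, Real.zero_rpow hexp.ne'] at hcont
    exact nhdsWithin_le_nhds (hcont.eventually (eventually_lt_nhds (by positivity)))
  filter_upwards [hsmall, self_mem_nhdsWithin] with ρ hρ (hρpos : 0 < ρ)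
  calc ρ = ρ ^ (1 / q) * ρ ^ (1 - 1 / q) := by
        rw [← Real.rpow_add hρpos, add_sub_cancel, Real.rpow_one]
    _ < ρ ^ (1 / q) * α ^ (1 / q) := by gcongr
    _ = (α * ρ) ^ (1 / q) := by rw [mul_comm, Real.mul_rpow hα.le hρpos.le]

theorem tendsto_mul_rpow_nhds_zero {q α : ℝ} (hq : 0 < q) :
    Tendsto (fun ρ : ℝ => (α * ρ) ^ (1 / q)) (𝓝 0) (𝓝 0) := by
  have hcont : ContinuousAt (fun ρ : ℝ => (α * ρ) ^ (1 / q)) 0 :=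
    (Real.continuousAt_rpow_const _ _ (Or.inr (by positivity))).comp
      (continuous_const.mul continuous_id).continuousAt
  simpa [Real.zero_rpow (inv_pos.2 hq).ne'] using hcont.tendsto

namespace SemiReg

section

variable {E : Type*} [NormedAddCommGroup E] {m : ℕ} {q : ℝ} {Ω : Fin m → Set E} {x₀ : E}

theorem eventually_translate_single (h : SemiReg q Ω x₀) :
    ∃ α > (0 : ℝ), ∀ᶠ ρ in 𝓝[>] (0 : ℝ), ∀ i (v : E), ‖v‖ ≤ (α * ρ) ^ (1 / q) →
      ∃ y ∈ closedBall x₀ ρ, y + v ∈ Ω i := by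
  obtain ⟨α, hα, δ, hδ, hsemi⟩ := h
  refine ⟨α, hα, ?_⟩
  filter_upwards [Ioo_mem_nhdsGT hδ] with ρ hρ i v hv
  have hsingle : ∀ j, ‖(Pi.single i v : Fin m → E) j‖ ≤ (α * ρ) ^ (1 / q) := by
    intro j
    rcases eq_or_ne j i with rfl | hj
    · simpa using hv
    · simpa [hj] using Real.rpow_nonneg (mul_nonneg hα.le hρ.1.le) _
  obtain ⟨y, hy, hmem⟩ := hsemi ρ hρ _ hsingle
  exact ⟨y, hy, by simpa using hmem i⟩

theorem mem_closure (h : SemiReg q Ω x₀) (i : Fin m) : x₀ ∈ closure (Ω i) := by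
  obtain ⟨α, hα, hev⟩ := h.eventually_translate_single
  refine Metric.mem_closure_iff.2 fun ε hε => ?_
  obtain ⟨ρ, hρ, hρε⟩ := (hev.and (Ioo_mem_nhdsGT hε)).exists
  obtain ⟨y, hy, hyΩ⟩ := hρ i 0 (by simpa using Real.rpow_nonneg (mul_nonneg hα.le hρε.1.le) _)
  exact ⟨y, by simpa using hyΩ, (mem_closedBall'.1 hy).trans_lt hρε.2⟩

end

theorem eq_zero_of_mem_proxNormal {m : ℕ} {q : ℝ} {Ω : Fin m → Set X} {x₀ : X} (hq : 1 < q)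
    (h : SemiReg q Ω x₀) {i : Fin m} {u : X}
    (hu : u ∈ ProxNormal (Ω i) x₀) : u = 0 := by
  by_contra hu0
  obtain ⟨r, hr, hru⟩ := hu
  have hnorm : 0 < ‖u‖ := norm_pos_iff.2 hu0
  obtain ⟨α, hα, hev⟩ := h.eventually_translate_single
  have hsmall : ∀ᶠ ρ in 𝓝[>] (0 : ℝ), (α * ρ) ^ (1 / q) < r * ‖u‖ := nhdsWithin_le_nhds <|
    (tendsto_mul_rpow_nhds_zero (by linarith)).eventually (eventually_lt_nhds (by positivity))
  obtain ⟨ρ, hρ, hlt, hsmallρ, hρpos⟩ := (hev.and ((eventually_lt_mul_rpow hq hα).and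
    (hsmall.and self_mem_nhdsWithin))).exists
  set s := (α * ρ) ^ (1 / q)
  set t := s / ‖u‖
  have hts : t * ‖u‖ = s := div_mul_cancel₀ s hnorm.ne'
  have hs : 0 ≤ s := hρpos.le.trans hlt.le
  obtain ⟨y, hy, hyΩ⟩ := hρ i (t • u) (by
    rw [norm_smul, Real.norm_of_nonneg (div_nonneg hs hnorm.le), hts])
  have hupper : infDist (x₀ + t • u) (Ω i) ≤ ρ :=
    calc infDist (x₀ + t • u) (Ω i) ≤ dist (x₀ + t • u) (y + t • u) :=
          infDist_le_dist_of_mem hyΩ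
      _ = dist y x₀ := by rw [dist_add_right, dist_comm]
      _ ≤ ρ := mem_closedBall.1 hy
  have hlower := mul_norm_le_infDist_add_smul hru (t := t)
    ((div_le_iff₀ hnorm).2 hsmallρ.le)
  linarith

end SemiReg

theorem semiReg_gt_one_implies_interior_general {m : ℕ} (q : ℝ) (hq : 1 < q)
    (Ω : Fin m → Set X) (x₀ : X)
    (h : SemiReg q Ω x₀)
    (hN : ∀ i, x₀ ∈ frontier (Ω i) → ∃ u ∈ ProxNormal (Ω i) x₀, u ≠ 0) :
    x₀ ∈ interior (⋂ i, Ω i) := by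
  rw [interior_iInter_of_finite, Set.mem_iInter]
  intro i
  by_contra hint
  obtain ⟨u, hu, hu0⟩ := hN i ⟨h.mem_closure i, hint⟩
  exact hu0 (h.eq_zero_of_mem_proxNormal hq hu)

theorem semiReg_gt_one_implies_interior {m : ℕ} (q : ℝ) (hq : 1 < q)
    (Ω : Fin m → Set X) (hΩ : ∀ i, IsClosed (Ω i)) (x₀ : X) (hx₀ : ∀ i, x₀ ∈ Ω i)
    (h : SemiReg q Ω x₀)
    (hN : ∀ i, x₀ ∈ frontier (Ω i) → ∃ u ∈ ProxNormal (Ω i) x₀, u ≠ 0) :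
    x₀ ∈ interior (⋂ i, Ω i) :=
  semiReg_gt_one_implies_interior_general q hq Ω x₀ h hN
end

section
/- A collection Ω₁,…,Ω_m is [q]-semiregular at x̄ if and only if there exist γ, δ > 0 such that γ·d(x̄, ⋂ᵢ(Ωᵢ − xᵢ)) ≤ (max_{1≤i≤m} ‖xᵢ‖)^q for all x₁,…,x_m ∈ δ𝔹 (metric [q]-semiregularity). -/
variable {X : Type*} [NormedAddCommGroup X] [NormedSpace ℝ X]

/-!
With `M = max ‖xᵢ‖`, the constraint `‖xᵢ‖ ≤ (αρ)^(1/q)` says `M^q ≤ αρ`. So semiregularity puts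
a point of `⋂ (Ωᵢ - xᵢ)` within `ρ` of `x̄` for every `ρ ∈ (M^q/α, δ)`, i.e. `α d(x̄, ⋂ (Ωᵢ - xᵢ)) ≤ M^q`.
Conversely `γ d ≤ M^q ≤ γρ/2 < γρ` yields a point at distance `< ρ`; the factor `2` absorbs the
passage from the infimum to an attained distance.
-/

open Metric Set Filter ENNReal

lemma forall_le_rpow_one_div_iff_iSup_rpow_le {ι : Type*} [Finite ι] {f : ι → ℝ}
    (hf : ∀ i, 0 ≤ f i) {q r : ℝ} (hq : 0 < q) (hr : 0 ≤ r) :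
    (∀ i, f i ≤ r ^ (1 / q)) ↔ (⨆ i, f i) ^ q ≤ r := by
  rw [one_div, ← Real.le_rpow_inv_iff_of_pos (Real.iSup_nonneg hf) hr hq]
  exact ⟨fun h => Real.iSup_le h (by positivity),
    fun h i => (le_ciSup (Finite.bddAbove_range f) i).trans h⟩

lemma le_ofReal_of_forall_mem_Ioo {a : ℝ≥0∞} {r δ : ℝ} (hrδ : r < δ)
    (h : ∀ ρ ∈ Ioo r δ, a ≤ ENNReal.ofReal ρ) : a ≤ ENNReal.ofReal r :=
  ge_of_tendsto (ENNReal.continuous_ofReal.tendsto r |>.mono_left nhdsWithin_le_nhds)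
    (eventually_of_mem (Ioo_mem_nhdsGT hrδ) h)

section PseudoMetric

variable {E : Type*} [PseudoMetricSpace E] {s : Set E} {x y : E} {r : ℝ}

lemma infEDist_le_ofReal_of_mem_closedBall (hy : y ∈ closedBall x r) (hys : y ∈ s) :
    infEDist x s ≤ ENNReal.ofReal r :=
  (infEDist_le_edist_of_mem hys).trans
    ((edist_le_ofReal (dist_nonneg.trans hy)).2 (mem_closedBall'.1 hy))

lemma exists_mem_closedBall_of_infEDist_lt (h : infEDist x s < ENNReal.ofReal r) :
    ∃ y ∈ closedBall x r, y ∈ s := by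
  obtain ⟨y, hys, hy⟩ := infEDist_lt_iff.1 h
  exact ⟨y, mem_closedBall'.2 (edist_lt_ofReal.1 hy).le, hys⟩

end PseudoMetric

section Translates

variable {E : Type*} [NormedAddCommGroup E] {m : ℕ} {q : ℝ} {Ω : Fin m → Set E} {x₀ : E}

/-- `infEDist x s = ⊤` for empty `s`, matching the convention `d(x, ∅) = +∞`. -/
def MetricSemiReg (q : ℝ) (Ω : Fin m → Set E) (x₀ : E) : Prop :=
  ∃ γ > (0:ℝ), ∃ δ > (0:ℝ), ∀ x : Fin m → E, (∀ i, ‖x i‖ ≤ δ) →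
    ENNReal.ofReal γ * infEDist x₀ {y : E | ∀ i, y + x i ∈ Ω i}
      ≤ ENNReal.ofReal ((⨆ i, ‖x i‖) ^ q)

theorem SemiReg.metricSemiReg (hq : 0 < q) (h : SemiReg q Ω x₀) : MetricSemiReg q Ω x₀ := by
  obtain ⟨α, hα, δ, hδ, H⟩ := h
  refine ⟨α, hα, (α * (δ / 2)) ^ (1 / q), by positivity, fun x hx => ?_⟩
  have hnorm : ∀ i, 0 ≤ ‖x i‖ := fun i => norm_nonneg _
  set M := ⨆ i, ‖x i‖
  have hM : 0 ≤ M ^ q := Real.rpow_nonneg (Real.iSup_nonneg hnorm) q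
  have hMq : M ^ q ≤ α * (δ / 2) :=
    (forall_le_rpow_one_div_iff_iSup_rpow_le hnorm hq (by positivity)).1 hx
  have hdist : infEDist x₀ {y : E | ∀ i, y + x i ∈ Ω i} ≤ ENNReal.ofReal (M ^ q / α) := by
    refine le_ofReal_of_forall_mem_Ioo (δ := δ) ?_ fun ρ hρ => ?_
    · rw [div_lt_iff₀ hα]
      linarith [mul_pos hα hδ]
    have hρ0 : 0 < ρ := lt_of_le_of_lt (div_nonneg hM hα.le) hρ.1
    obtain ⟨y, hy, hyS⟩ := H ρ ⟨hρ0, hρ.2⟩ x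
      ((forall_le_rpow_one_div_iff_iSup_rpow_le hnorm hq (by positivity)).2
        ((div_lt_iff₀' hα).1 hρ.1).le)
    exact infEDist_le_ofReal_of_mem_closedBall hy hyS
  calc ENNReal.ofReal α * infEDist x₀ {y : E | ∀ i, y + x i ∈ Ω i}
      ≤ ENNReal.ofReal α * ENNReal.ofReal (M ^ q / α) := by gcongr
    _ = ENNReal.ofReal (M ^ q) := by
      rw [← ENNReal.ofReal_mul hα.le, mul_div_cancel₀ _ hα.ne']

theorem MetricSemiReg.semiReg (hq : 0 < q) (h : MetricSemiReg q Ω x₀) : SemiReg q Ω x₀ := by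
  obtain ⟨γ, hγ, δ, hδ, H⟩ := h
  refine ⟨γ / 2, by positivity, 2 * δ ^ q / γ, by positivity, fun ρ hρ x hx => ?_⟩
  have hnorm : ∀ i, 0 ≤ ‖x i‖ := fun i => norm_nonneg _
  have hρ0 : 0 < ρ := hρ.1
  set M := ⨆ i, ‖x i‖
  have hMq : M ^ q ≤ γ / 2 * ρ :=
    (forall_le_rpow_one_div_iff_iSup_rpow_le hnorm hq (by positivity)).1 hx
  have hxδ : ∀ i, ‖x i‖ ≤ δ := by
    have hγρ : γ / 2 * ρ ≤ δ ^ q := by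
      linarith [(lt_div_iff₀ hγ).1 hρ.2]
    have := (forall_le_rpow_one_div_iff_iSup_rpow_le hnorm hq (by positivity)).2 (hMq.trans hγρ)
    rwa [one_div, Real.rpow_rpow_inv hδ.le hq.ne'] at this
  have hlt : ENNReal.ofReal γ * infEDist x₀ {y : E | ∀ i, y + x i ∈ Ω i}
      < ENNReal.ofReal γ * ENNReal.ofReal ρ :=
    calc ENNReal.ofReal γ * infEDist x₀ {y : E | ∀ i, y + x i ∈ Ω i}
        ≤ ENNReal.ofReal (M ^ q) := H x hxδ
      _ ≤ ENNReal.ofReal (γ / 2 * ρ) := ENNReal.ofReal_le_ofReal hMq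
      _ < ENNReal.ofReal (γ * ρ) :=
        (ENNReal.ofReal_lt_ofReal_iff (by positivity)).2 (by linarith [mul_pos hγ hρ0])
      _ = ENNReal.ofReal γ * ENNReal.ofReal ρ := ENNReal.ofReal_mul hγ.le
  exact exists_mem_closedBall_of_infEDist_lt
    ((ENNReal.mul_lt_mul_iff_right (ofReal_pos.2 hγ).ne' ofReal_ne_top).1 hlt)

end Translates

theorem semiReg_iff_metric_general {m : ℕ} (q : ℝ) (hq0 : 0 < q)
    (Ω : Fin m → Set X) (x₀ : X) :
    SemiReg q Ω x₀ ↔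
      ∃ γ > (0:ℝ), ∃ δ > (0:ℝ), ∀ x : Fin m → X, (∀ i, ‖x i‖ ≤ δ) →
        ENNReal.ofReal γ * EMetric.infEdist x₀ {y : X | ∀ i, y + x i ∈ Ω i}
          ≤ ENNReal.ofReal ((⨆ i, ‖x i‖) ^ q) :=
  ⟨SemiReg.metricSemiReg hq0, MetricSemiReg.semiReg hq0⟩

/-- Theorem 2.1(i): `[q]`-semiregularity is equivalent to metric `[q]`-semiregularity.
The distance to the (possibly empty) intersection of the translated sets is taken in `ℝ≥0∞`. -/
theorem semiReg_iff_metric {m : ℕ} (hm : 0 < m) (q : ℝ) (hq0 : 0 < q) (hq1 : q ≤ 1)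
    (Ω : Fin m → Set X) (x₀ : X) (hx₀ : ∀ i, x₀ ∈ Ω i) :
    SemiReg q Ω x₀ ↔
      ∃ γ > (0:ℝ), ∃ δ > (0:ℝ), ∀ x : Fin m → X, (∀ i, ‖x i‖ ≤ δ) →
        ENNReal.ofReal γ * EMetric.infEdist x₀ {y : X | ∀ i, y + x i ∈ Ω i}
          ≤ ENNReal.ofReal ((⨆ i, ‖x i‖) ^ q) :=
  semiReg_iff_metric_general q hq0 Ω x₀
end

section
/- A collection Ω₁,…,Ω_m is [q]-subregular at x̄ if and only if there exist γ, δ > 0 such that γ·d(x, ⋂ᵢ Ωᵢ) ≤ max_{1≤i≤m} d(x,Ωᵢ)^q for all x ∈ B_δ(x̄) (metric [q]-subregularity). -/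
variable {X : Type*} [NormedAddCommGroup X] [NormedSpace ℝ X]

/-!
Write `s(x) = maxᵢ d(x, Ωᵢ)`. For `t > s(x)` every `Ωᵢ` has a point within `t` of `x`, so
`[q]`-subregularity with `ρ = t^q / α` gives `α d(x, ⋂ᵢ Ωᵢ) ≤ t^q`; letting `t` decrease to `s(x)`
yields metric `[q]`-subregularity. This `ρ` is admissible near `x̄` because `s(x) ≤ ‖x - x̄‖`.
Conversely, if every `Ωᵢ` meets the ball of radius `(γρ/2)^{1/q}` about `x`, then
`s(x)^q ≤ γρ/2`, so `d(x, ⋂ᵢ Ωᵢ) ≤ ρ/2 < ρ` and some point of `⋂ᵢ Ωᵢ` lies within `ρ` of `x`.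
-/

open Metric Set Filter

theorem le_of_forall_mem_Ioo_le {f : ℝ → ℝ} {a s T : ℝ} (hf : ContinuousWithinAt f (Ioi s) s)
    (hsT : s < T) (h : ∀ t ∈ Ioo s T, a ≤ f t) : a ≤ f s :=
  ge_of_tendsto hf.tendsto (eventually_of_mem (Ioo_mem_nhdsGT hsT) h)

section InfDist

variable {E ι : Type*} [PseudoMetricSpace E]

theorem Metric.iSup_infDist_nonneg (x : E) (Ω : ι → Set E) : 0 ≤ ⨆ i, infDist x (Ω i) :=
  Real.iSup_nonneg fun _ => infDist_nonneg

theorem Metric.infDist_le_iSup_infDist [Finite ι] (x : E) (Ω : ι → Set E) (i : ι) :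
    infDist x (Ω i) ≤ ⨆ j, infDist x (Ω j) :=
  le_ciSup (f := fun j => infDist x (Ω j)) (finite_range _).bddAbove i

theorem Metric.iSup_infDist_le_dist {x y : E} {Ω : ι → Set E} (hy : ∀ i, y ∈ Ω i) :
    ⨆ i, infDist x (Ω i) ≤ dist x y :=
  Real.iSup_le (fun i => infDist_le_dist_of_mem (hy i)) dist_nonneg

end InfDist

section SubReg

variable {E : Type*} [NormedAddCommGroup E] {m : ℕ} {q : ℝ} {Ω : Fin m → Set E} {x₀ : E}

def MetricSubReg (q : ℝ) (Ω : Fin m → Set E) (x₀ : E) : Prop :=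
  ∃ γ > (0:ℝ), ∃ δ > (0:ℝ), ∀ x ∈ closedBall x₀ δ,
    γ * infDist x (⋂ i, Ω i) ≤ (⨆ i, infDist x (Ω i)) ^ q

theorem SubReg.metricSubReg (hq : 0 < q) (hx₀ : ∀ i, x₀ ∈ Ω i) (h : SubReg q Ω x₀) :
    MetricSubReg q Ω x₀ := by
  obtain ⟨α, hα, δ, hδ, H⟩ := h
  set T := (α * δ) ^ q⁻¹
  have hT : 0 < T := by positivity
  refine ⟨α, hα, min δ (T / 2), by positivity, fun x hx => ?_⟩
  have hxT : dist x x₀ < T :=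
    (mem_closedBall.1 hx).trans_lt ((min_le_right _ _).trans_lt (by linarith))
  refine le_of_forall_mem_Ioo_le (f := fun t => t ^ q)
    (Real.continuousAt_rpow_const _ q (Or.inr hq.le)).continuousWithinAt
    ((iSup_infDist_le_dist hx₀).trans_lt hxT) fun t ht => ?_
  have ht0 : 0 < t := (iSup_infDist_nonneg x Ω).trans_lt ht.1
  have htq : t ^ q < α * δ := by
    simpa only [T, Real.rpow_inv_rpow (by positivity : 0 ≤ α * δ) hq.ne'] using
      Real.rpow_lt_rpow ht0.le ht.2 hq
  obtain ⟨z, hz, hxz⟩ := H (t ^ q / α) ⟨by positivity, by rwa [div_lt_iff₀ hα, mul_comm]⟩ x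
    (closedBall_subset_closedBall (min_le_left _ _) hx) fun i => by
      obtain ⟨w, hw, hxw⟩ :=
        (infDist_lt_iff ⟨x₀, hx₀ i⟩).1 ((infDist_le_iSup_infDist x Ω i).trans_lt ht.1)
      refine ⟨w, hw, ?_⟩
      rw [mul_div_cancel₀ _ hα.ne', one_div, Real.rpow_rpow_inv ht0.le hq.ne', ← dist_eq_norm]
      exact hxw.le
  calc α * infDist x (⋂ i, Ω i) ≤ α * (t ^ q / α) := by
        gcongr
        exact (infDist_le_dist_of_mem (mem_iInter.2 hz)).trans (by rwa [dist_eq_norm])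
    _ = t ^ q := mul_div_cancel₀ _ hα.ne'

theorem MetricSubReg.subReg (hq : 0 < q) (hx₀ : ∀ i, x₀ ∈ Ω i) (h : MetricSubReg q Ω x₀) :
    SubReg q Ω x₀ := by
  obtain ⟨γ, hγ, δ, hδ, H⟩ := h
  refine ⟨γ / 2, by positivity, δ, hδ, fun ρ hρ y hy hw => ?_⟩
  have hsup : (⨆ i, infDist y (Ω i)) ^ q ≤ γ / 2 * ρ := by
    have := hρ.1
    rw [← Real.le_rpow_inv_iff_of_pos (iSup_infDist_nonneg y Ω) (by positivity) hq, ← one_div]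
    refine Real.iSup_le (fun i => ?_) (by positivity)
    obtain ⟨w, hw, hyw⟩ := hw i
    exact (infDist_le_dist_of_mem hw).trans (by rwa [dist_eq_norm])
  have hd : infDist y (⋂ i, Ω i) < ρ := by nlinarith [H y hy, hρ.1]
  obtain ⟨z, hz, hyz⟩ := (infDist_lt_iff ⟨x₀, mem_iInter.2 hx₀⟩).1 hd
  exact ⟨z, mem_iInter.1 hz, by rw [← dist_eq_norm]; exact hyz.le⟩

end SubReg

theorem subReg_iff_metric_general {m : ℕ} (q : ℝ) (hq0 : 0 < q)
    (Ω : Fin m → Set X) (x₀ : X) (hx₀ : ∀ i, x₀ ∈ Ω i) :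
    SubReg q Ω x₀ ↔
      ∃ γ > (0:ℝ), ∃ δ > (0:ℝ), ∀ x ∈ Metric.closedBall x₀ δ,
        γ * Metric.infDist x (⋂ i, Ω i) ≤ (⨆ i, Metric.infDist x (Ω i)) ^ q :=
  ⟨SubReg.metricSubReg hq0 hx₀, MetricSubReg.subReg hq0 hx₀⟩

/-- Theorem 2.1(ii): `[q]`-subregularity is equivalent to metric `[q]`-subregularity. -/
theorem subReg_iff_metric {m : ℕ} (hm : 0 < m) (q : ℝ) (hq0 : 0 < q) (hq1 : q ≤ 1)
    (Ω : Fin m → Set X) (x₀ : X) (hx₀ : ∀ i, x₀ ∈ Ω i) :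
    SubReg q Ω x₀ ↔
      ∃ γ > (0:ℝ), ∃ δ > (0:ℝ), ∀ x ∈ Metric.closedBall x₀ δ,
        γ * Metric.infDist x (⋂ i, Ω i) ≤ (⨆ i, Metric.infDist x (Ω i)) ^ q :=
  subReg_iff_metric_general q hq0 Ω x₀ hx₀
end

section
/- A collection Ω₁,…,Ω_m is uniformly [q]-regular at x̄ if and only if there exist γ, δ > 0 such that γ·d(x, ⋂ᵢ(Ωᵢ − xᵢ)) ≤ max_{1≤i≤m} d(x + xᵢ, Ωᵢ)^q for all x ∈ B_δ(x̄) and all x₁,…,x_m ∈ δ𝔹 (metric uniform [q]-regularity). -/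
variable {X : Type*} [NormedAddCommGroup X] [NormedSpace ℝ X]

/-!
Regularity ⇒ metric regularity: given `x` and small `xᵢ`, let `r = maxᵢ d(x + xᵢ, Ωᵢ)` and, for
`s > r`, pick `ωᵢ ∈ Ωᵢ` with `‖x + xᵢ - ωᵢ‖ < s`. Regularity at the `ωᵢ` with `ρ = s^q / α` moves `x`
by at most `ρ` into `⋂ᵢ (Ωᵢ - xᵢ)`, so `α d(x, ⋂ᵢ (Ωᵢ - xᵢ)) ≤ s^q`; now let `s ↓ r`.

Metric regularity ⇒ regularity: apply the metric estimate at `x̄` to the translations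
`ωᵢ + xᵢ - x̄`. Its right-hand side is at most `maxᵢ ‖xᵢ‖^q ≤ αρ`, so with `α = γ / 2` the distance
from `x̄` to the intersection is strictly below `ρ`, hence attained within `ρ` by some point.
-/

open Metric Set Filter Topology
open scoped ENNReal

section

variable {E : Type*} [SeminormedAddCommGroup E] {ι : Type*}

/- The two sides of `unifReg_iff_metric` with their constants fixed, for any index type. -/

def UnifRegWith (q : ℝ) (Ω : ι → Set E) (x₀ : E) (α δ : ℝ) : Prop :=
  ∀ ρ ∈ Ioo (0:ℝ) δ, ∀ ω x : ι → E,
    (∀ i, ω i ∈ Ω i ∧ ω i ∈ closedBall x₀ δ) →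
    (∀ i, ‖x i‖ ≤ (α * ρ) ^ (1 / q)) →
    ∃ z, ‖z‖ ≤ ρ ∧ ∀ i, z + ω i + x i ∈ Ω i

def MetricUnifRegWith (q : ℝ) (Ω : ι → Set E) (x₀ : E) (γ δ : ℝ) : Prop :=
  ∀ x ∈ closedBall x₀ δ, ∀ xs : ι → E, (∀ i, ‖xs i‖ ≤ δ) →
    ENNReal.ofReal γ * infEDist x {y | ∀ i, y + xs i ∈ Ω i}
      ≤ ENNReal.ofReal ((⨆ i, infDist (x + xs i) (Ω i)) ^ q)

lemma iSup_infDist_le {Ω : ι → Set E} {p w : ι → E} {s : ℝ} (hw : ∀ i, w i ∈ Ω i) (hs : 0 ≤ s)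
    (h : ∀ i, dist (p i) (w i) ≤ s) : ⨆ i, infDist (p i) (Ω i) ≤ s :=
  Real.iSup_le (fun i => (infDist_le_dist_of_mem (hw i)).trans (h i)) hs

lemma le_ofReal_rpow_of_forall_mem_Ioo {a : ℝ≥0∞} {r q η : ℝ} (hq : 0 ≤ q) (hη : 0 < η)
    (h : ∀ s ∈ Ioo r (r + η), a ≤ ENNReal.ofReal (s ^ q)) : a ≤ ENNReal.ofReal (r ^ q) := by
  have hcont : Tendsto (fun s : ℝ => ENNReal.ofReal (s ^ q)) (𝓝[>] r) (𝓝 (ENNReal.ofReal (r ^ q))) :=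
    ((ENNReal.continuous_ofReal.tendsto _).comp
      (Real.continuousAt_rpow_const r q (Or.inr hq))).mono_left nhdsWithin_le_nhds
  exact ge_of_tendsto hcont (eventually_of_mem (Ioo_mem_nhdsGT (by linarith)) h)

namespace UnifRegWith

variable {q α δ : ℝ} {Ω : ι → Set E} {x₀ : E}

lemma ofReal_mul_infEDist_le (H : UnifRegWith q Ω x₀ α δ) (hq : 0 < q) (hα : 0 < α)
    {x : E} {xs ω : ι → E} (hω : ∀ i, ω i ∈ Ω i ∧ ω i ∈ closedBall x₀ δ)
    {s : ℝ} (hs : 0 < s) (hsω : ∀ i, dist (x + xs i) (ω i) ≤ s) (hsδ : s ^ q < α * δ) :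
    ENNReal.ofReal α * infEDist x {y | ∀ i, y + xs i ∈ Ω i} ≤ ENNReal.ofReal (s ^ q) := by
  set ρ := s ^ q / α
  have hαρ : α * ρ = s ^ q := mul_div_cancel₀ _ hα.ne'
  have hρ : ρ ∈ Ioo 0 δ := ⟨by positivity, (div_lt_iff₀' hα).2 hsδ⟩
  obtain ⟨z, hz, hzΩ⟩ := H ρ hρ ω (fun i => x + xs i - ω i) hω fun i => by
    rw [hαρ, one_div, Real.rpow_rpow_inv hs.le hq.ne', ← dist_eq_norm]
    exact hsω i
  have hxz : x + z ∈ {y | ∀ i, y + xs i ∈ Ω i} := fun i => by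
    simpa only [show z + ω i + (x + xs i - ω i) = x + z + xs i by abel] using hzΩ i
  calc ENNReal.ofReal α * infEDist x _
      ≤ ENNReal.ofReal α * ENNReal.ofReal ‖z‖ := by
        gcongr
        calc infEDist x _ ≤ edist x (x + z) := infEDist_le_edist_of_mem hxz
          _ = ENNReal.ofReal ‖z‖ := by rw [edist_dist, dist_self_add_right]
    _ ≤ ENNReal.ofReal (α * ρ) := by
        rw [ENNReal.ofReal_mul hα.le]
        gcongr
    _ = ENNReal.ofReal (s ^ q) := by rw [hαρ]

lemma exists_metricUnifRegWith [Finite ι] (H : UnifRegWith q Ω x₀ α δ) (hq : 0 < q) (hα : 0 < α)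
    (hδ : 0 < δ) (hx₀ : ∀ i, x₀ ∈ Ω i) : ∃ δ' > 0, MetricUnifRegWith q Ω x₀ α δ' := by
  -- the points `x + xᵢ` lie within `2δ'` of `x₀`, so the admissible `s` stay below `3δ'`
  -- and the chosen `ωᵢ` within `5δ'` of `x₀`
  set δ' := min (δ / 5) ((α * δ) ^ (1 / q) / 3)
  have hδ' : 0 < δ' := by positivity
  have h5 : 5 * δ' ≤ δ := by linarith [min_le_left (δ / 5) ((α * δ) ^ (1 / q) / 3)]
  have h3 : (3 * δ') ^ q ≤ α * δ := by
    have : 3 * δ' ≤ (α * δ) ^ (1 / q) := by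
      linarith [min_le_right (δ / 5) ((α * δ) ^ (1 / q) / 3)]
    calc (3 * δ') ^ q ≤ ((α * δ) ^ (1 / q)) ^ q := by gcongr
      _ = α * δ := by rw [one_div, Real.rpow_inv_rpow (by positivity) hq.ne']
  refine ⟨δ', hδ', fun x hx xs hxs => ?_⟩
  have hnear : ∀ i, dist (x + xs i) x₀ ≤ 2 * δ' := fun i =>
    (dist_triangle _ x _).trans (by rw [dist_self_add_left]; linarith [hxs i, mem_closedBall.1 hx])
  have hr : ⨆ i, infDist (x + xs i) (Ω i) ≤ 2 * δ' := iSup_infDist_le hx₀ (by positivity) hnear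
  refine le_ofReal_rpow_of_forall_mem_Ioo hq.le hδ' fun s hs => ?_
  have hs0 : 0 < s := (Real.iSup_nonneg fun _ => infDist_nonneg).trans_lt hs.1
  have hω : ∀ i, ∃ w ∈ Ω i, dist (x + xs i) w < s := fun i =>
    (infDist_lt_iff ⟨x₀, hx₀ i⟩).1 ((le_ciSup (finite_range _).bddAbove i).trans_lt hs.1)
  choose ω hωΩ hωs using hω
  refine H.ofReal_mul_infEDist_le hq hα (fun i => ⟨hωΩ i, ?_⟩) hs0 (fun i => (hωs i).le) ?_
  · rw [mem_closedBall]
    linarith [dist_triangle (ω i) (x + xs i) x₀, dist_comm (ω i) (x + xs i), hωs i, hnear i, hs.2]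
  · calc s ^ q < (3 * δ') ^ q := Real.rpow_lt_rpow hs0.le (by linarith [hs.2]) hq
      _ ≤ α * δ := h3

end UnifRegWith

namespace MetricUnifRegWith

variable {q γ δ : ℝ} {Ω : ι → Set E} {x₀ : E}

lemma exists_unifRegWith (H : MetricUnifRegWith q Ω x₀ γ δ) (hq : 0 < q) (hγ : 0 < γ)
    (hδ : 0 < δ) : ∃ δ' > 0, UnifRegWith q Ω x₀ (γ / 2) δ' := by
  refine ⟨min (δ / 2) ((δ / 2) ^ q / (γ / 2)), by positivity, ?_⟩
  rintro ρ ⟨hρ0, hρδ⟩ ω v hω hv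
  set t := (γ / 2 * ρ) ^ (1 / q)
  have htq : t ^ q = γ / 2 * ρ := by
    dsimp only [t]
    rw [one_div, Real.rpow_inv_rpow (by positivity) hq.ne']
  have ht : t ≤ δ / 2 := by
    have : γ / 2 * ρ ≤ (δ / 2) ^ q := by
      have := hρδ.trans_le (min_le_right _ _)
      rw [lt_div_iff₀' (by positivity)] at this
      exact this.le
    calc t ≤ ((δ / 2) ^ q) ^ (1 / q) := Real.rpow_le_rpow (by positivity) this (by positivity)
      _ = δ / 2 := by rw [one_div, Real.rpow_rpow_inv (by positivity) hq.ne']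
  set xs := fun i => ω i + v i - x₀
  have hxs : ∀ i, ‖xs i‖ ≤ δ := fun i => by
    calc ‖xs i‖ = ‖(ω i - x₀) + v i‖ := by simp only [xs]; abel_nf
      _ ≤ dist (ω i) x₀ + ‖v i‖ := by rw [dist_eq_norm]; exact norm_add_le _ _
      _ ≤ δ := by linarith [mem_closedBall.1 (hω i).2, min_le_left (δ / 2) ((δ / 2) ^ q / (γ / 2)), hv i]
  have hsup : (⨆ i, infDist (x₀ + xs i) (Ω i)) ^ q ≤ γ / 2 * ρ := by
    refine (Real.rpow_le_rpow (Real.iSup_nonneg fun _ => infDist_nonneg) ?_ hq.le).trans_eq htq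
    refine iSup_infDist_le (fun i => (hω i).1) (by positivity) fun i => ?_
    rw [show x₀ + xs i = ω i + v i by simp only [xs]; abel, dist_self_add_left]
    exact hv i
  have hlt : infEDist x₀ {y | ∀ i, y + xs i ∈ Ω i} < ENNReal.ofReal ρ := by
    have h := (H x₀ (mem_closedBall_self (by positivity)) xs hxs).trans (ENNReal.ofReal_le_ofReal hsup)
    rw [show γ / 2 * ρ = γ * (ρ / 2) by ring, ENNReal.ofReal_mul hγ.le,
      ENNReal.mul_le_mul_iff_right (ENNReal.ofReal_pos.2 hγ).ne' ENNReal.ofReal_ne_top] at h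
    exact h.trans_lt ((ENNReal.ofReal_lt_ofReal_iff hρ0).2 (by linarith))
  obtain ⟨y, hy, hyρ⟩ := infEDist_lt_iff.1 hlt
  refine ⟨y - x₀, ?_, fun i => ?_⟩
  · rw [← dist_eq_norm, dist_comm]
    exact (edist_lt_ofReal.1 hyρ).le
  · simpa only [xs, show y + (ω i + v i - x₀) = y - x₀ + ω i + v i by abel] using hy i

end MetricUnifRegWith

end

theorem unifReg_iff_metric_general {m : ℕ} (q : ℝ) (hq0 : 0 < q)
    (Ω : Fin m → Set X) (x₀ : X) (hx₀ : ∀ i, x₀ ∈ Ω i) :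
    UnifReg q Ω x₀ ↔
      ∃ γ > (0:ℝ), ∃ δ > (0:ℝ), ∀ x ∈ Metric.closedBall x₀ δ, ∀ xs : Fin m → X,
        (∀ i, ‖xs i‖ ≤ δ) →
        ENNReal.ofReal γ * EMetric.infEdist x {y : X | ∀ i, y + xs i ∈ Ω i}
          ≤ ENNReal.ofReal ((⨆ i, Metric.infDist (x + xs i) (Ω i)) ^ q) := by
  constructor
  · rintro ⟨α, hα, δ, hδ, H⟩
    obtain ⟨δ', hδ', H'⟩ := UnifRegWith.exists_metricUnifRegWith H hq0 hα hδ hx₀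
    exact ⟨α, hα, δ', hδ', H'⟩
  · rintro ⟨γ, hγ, δ, hδ, H⟩
    obtain ⟨δ', hδ', H'⟩ := MetricUnifRegWith.exists_unifRegWith H hq0 hγ hδ
    exact ⟨γ / 2, by positivity, δ', hδ', H'⟩

/-- Theorem 2.1(iii): uniform `[q]`-regularity is equivalent to metric uniform
`[q]`-regularity. The distance to the (possibly empty) intersection of translated sets
is taken in `ℝ≥0∞`. -/
theorem unifReg_iff_metric {m : ℕ} (hm : 0 < m) (q : ℝ) (hq0 : 0 < q) (hq1 : q ≤ 1)
    (Ω : Fin m → Set X) (x₀ : X) (hx₀ : ∀ i, x₀ ∈ Ω i) :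
    UnifReg q Ω x₀ ↔
      ∃ γ > (0:ℝ), ∃ δ > (0:ℝ), ∀ x ∈ Metric.closedBall x₀ δ, ∀ xs : Fin m → X,
        (∀ i, ‖xs i‖ ≤ δ) →
        ENNReal.ofReal γ * EMetric.infEdist x {y : X | ∀ i, y + xs i ∈ Ω i}
          ≤ ENNReal.ofReal ((⨆ i, Metric.infDist (x + xs i) (Ω i)) ^ q) :=
  unifReg_iff_metric_general q hq0 Ω x₀ hx₀
end

section
/- In ℝ² with the Euclidean norm, let Ω₁ = {(u,v) : v ≥ 0} and Ω₂ = {(u,v) : v ≤ u²}, and x̄ = (0,0). Then the collection {Ω₁, Ω₂} is not metrically semiregular at x̄ (i.e., not [1]-semiregular), but it is metrically [1/2]-semiregular at x̄: there exist γ, δ > 0 such that γ·d(x̄, (Ω₁ − x₁) ∩ (Ω₂ − x₂)) ≤ max(‖x₁‖, ‖x₂‖)^{1/2} for all x₁, x₂ ∈ δ𝔹. -/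
open Metric

local notation "E" => EuclideanSpace ℝ (Fin 2)

/-- Metric `[q]`-semiregularity of the pair `{Ω₁, Ω₂}` at `0`, with the distance to the
(possibly empty) intersection of translated sets taken in `ℝ≥0∞` (so `d(x,∅) = ∞`). -/
def MetSemiReg (q : ℝ) (Ω₁ Ω₂ : Set E) : Prop :=
  ∃ γ > (0:ℝ), ∃ δ > (0:ℝ), ∀ x₁ x₂ : E, ‖x₁‖ ≤ δ → ‖x₂‖ ≤ δ →
    ENNReal.ofReal γ * EMetric.infEdist (0:E) {y : E | y + x₁ ∈ Ω₁ ∧ y + x₂ ∈ Ω₂}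
      ≤ ENNReal.ofReal ((max ‖x₁‖ ‖x₂‖) ^ q)

/-! The boundaries of `Ω₁ = {v ≥ 0}` and `Ω₂ = {v ≤ u²}` are tangent at the origin. Shifting
`Ω₂` down by `ε` forces every common point to have `|u| ≥ √ε`, so the distance to the shifted
intersection is of order `√ε` and cannot be bounded by `ε`. Conversely, for shifts of size at most
`m ≤ 1` the point `(3√m, 2m)` lies in both shifted sets, which gives the `[1/2]` estimate. -/

lemma metSemiReg_of_forall_exists {q γ δ : ℝ} {Ω₁ Ω₂ : Set E} (hγ : 0 < γ) (hδ : 0 < δ)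
    (h : ∀ x₁ x₂ : E, ‖x₁‖ ≤ δ → ‖x₂‖ ≤ δ →
      ∃ y, y + x₁ ∈ Ω₁ ∧ y + x₂ ∈ Ω₂ ∧ γ * ‖y‖ ≤ max ‖x₁‖ ‖x₂‖ ^ q) :
    MetSemiReg q Ω₁ Ω₂ := by
  refine ⟨γ, hγ, δ, hδ, fun x₁ x₂ h₁ h₂ => ?_⟩
  obtain ⟨y, hy₁, hy₂, hy⟩ := h x₁ x₂ h₁ h₂
  have hy_mem : y ∈ {y | y + x₁ ∈ Ω₁ ∧ y + x₂ ∈ Ω₂} := ⟨hy₁, hy₂⟩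
  calc ENNReal.ofReal γ * infEDist 0 {y | y + x₁ ∈ Ω₁ ∧ y + x₂ ∈ Ω₂}
      ≤ ENNReal.ofReal γ * ENNReal.ofReal ‖y‖ := by
        gcongr
        simpa [edist_dist] using infEDist_le_edist_of_mem (x := (0 : E)) hy_mem
    _ ≤ _ := by
        rw [← ENNReal.ofReal_mul hγ.le]
        exact ENNReal.ofReal_le_ofReal hy

lemma MetSemiReg.exists_mul_le_of_le_norm {q : ℝ} {Ω₁ Ω₂ : Set E} (h : MetSemiReg q Ω₁ Ω₂) :
    ∃ γ > (0:ℝ), ∃ δ > (0:ℝ), ∀ x₁ x₂ : E, ‖x₁‖ ≤ δ → ‖x₂‖ ≤ δ → ∀ r : ℝ,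
      (∀ y, y + x₁ ∈ Ω₁ → y + x₂ ∈ Ω₂ → r ≤ ‖y‖) → γ * r ≤ max ‖x₁‖ ‖x₂‖ ^ q := by
  obtain ⟨γ, hγ, δ, hδ, h⟩ := h
  refine ⟨γ, hγ, δ, hδ, fun x₁ x₂ h₁ h₂ r hr => ?_⟩
  have hdist : ENNReal.ofReal r ≤ infEDist 0 {y | y + x₁ ∈ Ω₁ ∧ y + x₂ ∈ Ω₂} :=
    le_infEDist.2 fun y ⟨hy₁, hy₂⟩ => by
      simpa [edist_dist] using ENNReal.ofReal_le_ofReal (hr y hy₁ hy₂)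
  have := (mul_le_mul_right hdist _).trans (h x₁ x₂ h₁ h₂)
  rwa [← ENNReal.ofReal_mul hγ.le, ENNReal.ofReal_le_ofReal_iff
    (Real.rpow_nonneg ((norm_nonneg _).trans (le_max_left _ _)) _)] at this

lemma sqrt_le_norm_of_add_le_sq {ε : ℝ} (y : E) (h₁ : 0 ≤ y 1) (h₂ : y 1 + ε ≤ y 0 ^ 2) :
    √ε ≤ ‖y‖ :=
  calc √ε ≤ √(y 0 ^ 2) := Real.sqrt_le_sqrt (by linarith)
    _ = ‖y 0‖ := by rw [Real.sqrt_sq_eq_abs, Real.norm_eq_abs]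
    _ ≤ ‖y‖ := PiLp.norm_apply_le y 0

theorem not_metSemiReg_one_parabola :
    ¬ MetSemiReg 1 {p : E | 0 ≤ p 1} {p : E | p 1 ≤ (p 0) ^ 2} := by
  intro h
  obtain ⟨γ, hγ, δ, hδ, hle⟩ := h.exists_mul_le_of_le_norm
  set ε := min δ (γ ^ 2 / 2)
  have hε : 0 < ε := by positivity
  have hnorm : ‖(EuclideanSpace.single 1 ε : E)‖ = ε := by simp [hε.le]
  have key := hle 0 (EuclideanSpace.single 1 ε) (by simpa using hδ.le)
    (hnorm.trans_le (min_le_left _ _)) √ε fun y h₁ h₂ =>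
      sqrt_le_norm_of_add_le_sq y (by simpa using h₁) (by simpa using h₂)
  rw [hnorm, norm_zero, max_eq_right hε.le, Real.rpow_one] at key
  have hsq : γ ≤ √ε := by
    nlinarith [Real.mul_self_sqrt hε.le, Real.sqrt_pos.2 hε]
  nlinarith [Real.sq_sqrt hε.le, min_le_right δ (γ ^ 2 / 2)]

noncomputable def parabolaPoint (m : ℝ) : E := !₂[3 * √m, 2 * m]

lemma parabolaPoint_add_mem {x₁ x₂ : E} {m : ℝ} (h₁ : ‖x₁‖ ≤ m) (h₂ : ‖x₂‖ ≤ m) (hm : m ≤ 1) :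
    parabolaPoint m + x₁ ∈ {p : E | 0 ≤ p 1} ∧
      parabolaPoint m + x₂ ∈ {p : E | p 1 ≤ (p 0) ^ 2} := by
  have h₁₁ := abs_le.1 ((PiLp.norm_apply_le x₁ 1).trans h₁)
  have h₂₀ := abs_le.1 ((PiLp.norm_apply_le x₂ 0).trans h₂)
  have h₂₁ := abs_le.1 ((PiLp.norm_apply_le x₂ 1).trans h₂)
  have hm₀ : 0 ≤ m := (norm_nonneg _).trans h₁
  have hm_sqrt : m ≤ √m := Real.le_sqrt_of_sq_le (by nlinarith)
  simp only [parabolaPoint, Set.mem_ofPred_eq, PiLp.add_apply, Matrix.cons_val_zero,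
    Matrix.cons_val_one]
  refine ⟨by linarith, ?_⟩
  have hbase : 2 * √m ≤ 3 * √m + x₂ 0 := by linarith
  calc 2 * m + x₂ 1 ≤ (2 * √m) ^ 2 := by nlinarith [Real.sq_sqrt hm₀]
    _ ≤ (3 * √m + x₂ 0) ^ 2 := pow_le_pow_left₀ (by positivity) hbase 2

lemma norm_parabolaPoint_le {m : ℝ} (hm₀ : 0 ≤ m) (hm : m ≤ 1) :
    ‖parabolaPoint m‖ ≤ 4 * √m := by
  rw [parabolaPoint, EuclideanSpace.norm_eq, Fin.sum_univ_two, Real.sqrt_le_iff]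
  simp only [Matrix.cons_val_zero, Matrix.cons_val_one, Real.norm_eq_abs, sq_abs, mul_pow,
    Real.sq_sqrt hm₀]
  exact ⟨by positivity, by nlinarith⟩

theorem metSemiReg_half_parabola :
    MetSemiReg ((1:ℝ)/2) {p : E | 0 ≤ p 1} {p : E | p 1 ≤ (p 0) ^ 2} := by
  refine metSemiReg_of_forall_exists (γ := 1/4) (δ := 1) (by norm_num) one_pos
    fun x₁ x₂ h₁ h₂ => ?_
  set m := max ‖x₁‖ ‖x₂‖
  have hm₀ : 0 ≤ m := (norm_nonneg _).trans (le_max_left _ _)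
  have hm : m ≤ 1 := max_le h₁ h₂
  obtain ⟨hy₁, hy₂⟩ := parabolaPoint_add_mem (le_max_left _ _) (le_max_right _ _) hm
  refine ⟨_, hy₁, hy₂, ?_⟩
  rw [← Real.sqrt_eq_rpow]
  linarith [norm_parabolaPoint_le hm₀ hm]

theorem semiReg_example :
    ¬ MetSemiReg 1 {p : E | 0 ≤ p 1} {p : E | p 1 ≤ (p 0) ^ 2} ∧
    MetSemiReg ((1:ℝ)/2) {p : E | 0 ≤ p 1} {p : E | p 1 ≤ (p 0) ^ 2} :=
  ⟨not_metSemiReg_one_parabola, metSemiReg_half_parabola⟩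
end

section
/- In ℝ² with the Euclidean norm, let Ω₁ = {(t,t²) : t ∈ ℝ} and Ω₂ = {(t,−t²) : t ∈ ℝ}, and x̄ = (0,0). Then the collection {Ω₁, Ω₂} is not metrically subregular at x̄ (i.e., there are no γ, δ > 0 with γ·d(x, Ω₁∩Ω₂) ≤ max(d(x,Ω₁), d(x,Ω₂)) for all x ∈ B_δ(x̄)), but it is metrically [1/2]-subregular: there exist γ, δ > 0 such that γ·d(x, Ω₁∩Ω₂) ≤ max(d(x,Ω₁), d(x,Ω₂))^{1/2} for all x ∈ B_δ(x̄). -/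
/-!
The parabolas `b = t²` and `b = -t²` are tangent at the origin. The point `(t, 0)` lies at
distance `t²` from both but at distance `t` from their intersection `{0}`, which rules out
linear subregularity. Conversely, a point `(a, b)` with `b ≥ 0` is at distance at least
`max b (a²/4)` from the lower parabola (either the horizontal offset is at least `|a|/2`, or the
foot point has `|t| ≥ |a|/2` and the vertical offset is at least `t²`), and symmetrically for
`b ≤ 0`; near the origin this dominates a multiple of `‖(a, b)‖²`.
-/

open Metric

local notation "E" => EuclideanSpace ℝ (Fin 2)

/-- Metric `[q]`-subregularity of the pair `{Ω₁, Ω₂}` at `0`. -/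
def MetSubReg (q : ℝ) (Ω₁ Ω₂ : Set E) : Prop :=
  ∃ γ > (0:ℝ), ∃ δ > (0:ℝ), ∀ x ∈ Metric.closedBall (0:E) δ,
    γ * Metric.infDist x (Ω₁ ∩ Ω₂) ≤ (max (Metric.infDist x Ω₁) (Metric.infDist x Ω₂)) ^ q

def upperParabola : Set E := {p : E | ∃ t : ℝ, p = ![t, t ^ 2]}

def lowerParabola : Set E := {p : E | ∃ t : ℝ, p = ![t, -t ^ 2]}

lemma mem_upperParabola {p : E} : p ∈ upperParabola ↔ ∃ t : ℝ, p = !₂[t, t ^ 2] := by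
  simp only [upperParabola, Set.mem_ofPred_eq, ← (WithLp.ofLp_injective 2).eq_iff]

lemma mem_lowerParabola {p : E} : p ∈ lowerParabola ↔ ∃ t : ℝ, p = !₂[t, -t ^ 2] := by
  simp only [lowerParabola, Set.mem_ofPred_eq, ← (WithLp.ofLp_injective 2).eq_iff]

lemma toLp_mem_upperParabola (t : ℝ) : !₂[t, t ^ 2] ∈ upperParabola := ⟨t, rfl⟩

lemma toLp_mem_lowerParabola (t : ℝ) : !₂[t, -t ^ 2] ∈ lowerParabola := ⟨t, rfl⟩

lemma upperParabola_inter_lowerParabola : upperParabola ∩ lowerParabola = {0} := by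
  ext p
  constructor
  · rintro ⟨⟨t, hp⟩, ⟨s, hs⟩⟩
    have hts : t = s := by simpa [hp] using congrFun hs 0
    have hsq : t ^ 2 = -s ^ 2 := by simpa [hp] using congrFun hs 1
    have ht : t = 0 := by nlinarith
    ext i
    fin_cases i <;> simp [hp, ht]
  · rintro rfl
    exact ⟨⟨0, by ext i; fin_cases i <;> simp⟩, ⟨0, by ext i; fin_cases i <;> simp⟩⟩

lemma metSubReg_iff_of_inter_eq_zero {q : ℝ} {Ω₁ Ω₂ : Set E} (h : Ω₁ ∩ Ω₂ = {0}) :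
    MetSubReg q Ω₁ Ω₂ ↔ ∃ γ > (0:ℝ), ∃ δ > (0:ℝ), ∀ x ∈ closedBall (0:E) δ,
      γ * ‖x‖ ≤ max (infDist x Ω₁) (infDist x Ω₂) ^ q := by
  simp only [MetSubReg, h, infDist_singleton, dist_zero_right]

lemma dist_toLp_eq_abs_sub (a b c : ℝ) : dist !₂[a, b] !₂[a, c] = |b - c| := by
  simp [EuclideanSpace.dist_eq, Fin.sum_univ_two, Real.dist_eq, Real.sqrt_sq_eq_abs]

lemma max_abs_sub_le_dist (x y : E) : max |x 0 - y 0| |x 1 - y 1| ≤ dist x y :=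
  max_le (PiLp.dist_apply_le x y 0) (PiLp.dist_apply_le x y 1)

lemma max_le_max_abs_sub_abs_add_sq {a b : ℝ} (hb : 0 ≤ b) (ha : |a| ≤ 2) (t : ℝ) :
    max b (a ^ 2 / 4) ≤ max |a - t| |b + t ^ 2| := by
  have hvert : b + t ^ 2 ≤ |b + t ^ 2| := le_abs_self _
  refine max_le (le_max_of_le_right (by nlinarith)) ?_
  rcases le_total (|a| / 2) |a - t| with hhor | hhor
  · exact le_max_of_le_left (by nlinarith [sq_abs a, abs_nonneg a])
  · have ht : |a| / 2 ≤ |t| := by linarith [abs_sub_abs_le_abs_sub a t]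
    exact le_max_of_le_right (by nlinarith [sq_abs a, sq_abs t, abs_nonneg a])

lemma max_le_infDist_lowerParabola {x : E} (hx : 0 ≤ x 1) (hx₀ : |x 0| ≤ 2) :
    max (x 1) (x 0 ^ 2 / 4) ≤ infDist x lowerParabola := by
  refine (le_infDist ⟨_, toLp_mem_lowerParabola 0⟩).2 ?_
  intro y hy
  obtain ⟨t, rfl⟩ := mem_lowerParabola.1 hy
  refine (max_le_max_abs_sub_abs_add_sq hx hx₀ t).trans ?_
  simpa using max_abs_sub_le_dist x !₂[t, -t ^ 2]

lemma max_le_infDist_upperParabola {x : E} (hx : x 1 ≤ 0) (hx₀ : |x 0| ≤ 2) :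
    max (-x 1) (x 0 ^ 2 / 4) ≤ infDist x upperParabola := by
  refine (le_infDist ⟨_, toLp_mem_upperParabola 0⟩).2 ?_
  intro y hy
  obtain ⟨t, rfl⟩ := mem_upperParabola.1 hy
  refine (max_le_max_abs_sub_abs_add_sq (neg_nonneg.2 hx) hx₀ t).trans ?_
  have := max_abs_sub_le_dist x !₂[t, t ^ 2]
  rwa [← abs_neg (x 1 - _), neg_sub', sub_neg_eq_add] at this

lemma max_infDist_toLp_le_sq (t : ℝ) :
    max (infDist !₂[t, 0] upperParabola) (infDist !₂[t, 0] lowerParabola) ≤ t ^ 2 := by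
  refine max_le ((infDist_le_dist_of_mem (toLp_mem_upperParabola t)).trans_eq ?_)
    ((infDist_le_dist_of_mem (toLp_mem_lowerParabola t)).trans_eq ?_) <;>
  simp [dist_toLp_eq_abs_sub]

lemma sq_norm_div_eight_le_max_infDist {x : E} (hx : ‖x‖ ≤ 1) :
    ‖x‖ ^ 2 / 8 ≤ max (infDist x upperParabola) (infDist x lowerParabola) := by
  have h₀ : |x 0| ≤ 1 := (PiLp.norm_apply_le x 0).trans hx
  have h₁ : |x 1| ≤ 1 := (PiLp.norm_apply_le x 1).trans hx
  have hnorm : ‖x‖ ^ 2 = x 0 ^ 2 + x 1 ^ 2 := by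
    simp [EuclideanSpace.norm_sq_eq, Fin.sum_univ_two]
  rw [hnorm]
  rcases le_total 0 (x 1) with hx₁ | hx₁
  · have hlow := max_le_infDist_lowerParabola hx₁ (by linarith)
    have hsq : x 1 ^ 2 ≤ x 1 := by nlinarith [abs_le.1 h₁]
    have := le_max_left (x 1) (x 0 ^ 2 / 4)
    have := le_max_right (x 1) (x 0 ^ 2 / 4)
    exact le_max_of_le_right (by linarith)
  · have hup := max_le_infDist_upperParabola hx₁ (by linarith)
    have hsq : x 1 ^ 2 ≤ -x 1 := by nlinarith [abs_le.1 h₁]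
    have := le_max_left (-x 1) (x 0 ^ 2 / 4)
    have := le_max_right (-x 1) (x 0 ^ 2 / 4)
    exact le_max_of_le_left (by linarith)

theorem not_metSubReg_one : ¬ MetSubReg 1 upperParabola lowerParabola := by
  rw [metSubReg_iff_of_inter_eq_zero upperParabola_inter_lowerParabola]
  rintro ⟨γ, hγ, δ, hδ, H⟩
  set t := min δ (γ / 2)
  have ht : 0 < t := lt_min hδ (half_pos hγ)
  have hnorm : ‖!₂[t, 0]‖ = t := by
    simp [EuclideanSpace.norm_eq, Fin.sum_univ_two, Real.sqrt_sq ht.le]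
  have hγt : γ * t ≤ t ^ 2 := by
    have := H _ (mem_closedBall_zero_iff.2 (hnorm.trans_le (min_le_left _ _)))
    rw [hnorm, Real.rpow_one] at this
    exact this.trans (max_infDist_toLp_le_sq t)
  nlinarith [min_le_right δ (γ / 2)]

theorem metSubReg_one_half : MetSubReg (1 / 2) upperParabola lowerParabola := by
  rw [metSubReg_iff_of_inter_eq_zero upperParabola_inter_lowerParabola]
  refine ⟨1 / 3, by norm_num, 1, one_pos, fun x hx => ?_⟩
  have hm := sq_norm_div_eight_le_max_infDist (mem_closedBall_zero_iff.1 hx)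
  rw [← Real.sqrt_eq_rpow, Real.le_sqrt (by positivity) ((by positivity : (0:ℝ) ≤ ‖x‖ ^ 2 / 8).trans hm)]
  nlinarith [sq_nonneg ‖x‖]

theorem subReg_example :
    ¬ MetSubReg 1 {p : E | ∃ t : ℝ, p = ![t, t ^ 2]} {p : E | ∃ t : ℝ, p = ![t, -t ^ 2]} ∧
    MetSubReg ((1:ℝ)/2) {p : E | ∃ t : ℝ, p = ![t, t ^ 2]} {p : E | ∃ t : ℝ, p = ![t, -t ^ 2]} :=
  ⟨not_metSubReg_one, metSubReg_one_half⟩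
end

section
/- Let X be a normed space and equip Xᵐ with the max-norm. For x̂ = (x₁,…,x_m) ∈ Xᵐ, the duality mapping satisfies: J(x₁,…,x_m) = {(x₁*,…,x_m*) ∈ (X*)ᵐ : Σᵢ‖xᵢ*‖ = 1, and for each i, either xᵢ* = 0, or (‖xᵢ‖ = max_j ‖x_j‖ and xᵢ* ∈ ‖xᵢ*‖·J(xᵢ))}. -/
/-!
Each term of the pairing satisfies `⟨xᵢ*, xᵢ⟩ ≤ ‖xᵢ*‖ ‖xᵢ‖ ≤ ‖xᵢ*‖ ‖x̂‖`, and these bounds add up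
to `‖x̂‖` when `Σᵢ ‖xᵢ*‖ = 1`. Hence the pairing equals `‖x̂‖` exactly when both inequalities are
equalities for every `i`; for `xᵢ* ≠ 0` this says that `xᵢ` has maximal norm and that
`xᵢ* / ‖xᵢ*‖` norms `xᵢ`.
-/

variable {X : Type*} [NormedAddCommGroup X] [NormedSpace ℝ X] {m : ℕ}

/-- The normalized duality mapping of `X`. -/
def dualityMap (y : X) : Set (StrongDual ℝ X) :=
  {p | ‖p‖ = 1 ∧ p y = ‖y‖}

lemma StrongDual.apply_le_opNorm_mul_norm (f : StrongDual ℝ X) (y : X) : f y ≤ ‖f‖ * ‖y‖ :=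
  (le_abs_self _).trans (f.le_opNorm y)

lemma exists_mem_dualityMap_smul_iff {f : StrongDual ℝ X} (hf : f ≠ 0) (y : X) :
    (∃ u ∈ dualityMap y, f = ‖f‖ • u) ↔ f y = ‖f‖ * ‖y‖ := by
  constructor
  · rintro ⟨u, ⟨-, hu⟩, hfu⟩
    conv_lhs => rw [hfu]
    rw [smul_apply, smul_eq_mul, hu]
  · intro hfy
    have hf' : ‖f‖ ≠ 0 := norm_ne_zero_iff.mpr hf
    refine ⟨‖f‖⁻¹ • f, ⟨?_, ?_⟩, ?_⟩
    · rw [norm_smul, norm_inv, norm_norm, inv_mul_cancel₀ hf']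
    · rw [smul_apply, hfy, smul_eq_mul, inv_mul_cancel_left₀ hf']
    · rw [smul_smul, mul_inv_cancel₀ hf', one_smul]

lemma StrongDual.apply_eq_opNorm_mul_iff {f : StrongDual ℝ X} {y : X} {c : ℝ} (hy : ‖y‖ ≤ c) :
    f y = ‖f‖ * c ↔ f = 0 ∨ ‖y‖ = c ∧ ∃ u ∈ dualityMap y, f = ‖f‖ • u := by
  rcases eq_or_ne f 0 with rfl | hf
  · simp
  rw [exists_mem_dualityMap_smul_iff hf, or_iff_right hf]
  constructor
  · intro hfc
    have hc : c ≤ ‖y‖ := le_of_mul_le_mul_left (hfc ▸ f.apply_le_opNorm_mul_norm y)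
      (norm_pos_iff.mpr hf)
    obtain rfl := le_antisymm hy hc
    exact ⟨rfl, hfc⟩
  · rintro ⟨rfl, hfy⟩
    exact hfy

lemma sum_apply_eq_sum_opNorm_mul_iff {ι : Type*} [Fintype ι] (p : ι → StrongDual ℝ X)
    (x : ι → X) :
    ∑ i, p i (x i) = (∑ i, ‖p i‖) * ‖x‖ ↔ ∀ i, p i (x i) = ‖p i‖ * ‖x‖ := by
  rw [Finset.sum_mul, Finset.sum_eq_sum_iff_of_le fun i _ =>
    ((p i).apply_le_opNorm_mul_norm _).trans (by gcongr; exact norm_le_pi_norm x i)]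
  simp only [Finset.mem_univ, true_imp_iff]

/-- Proposition 4.2: description of the duality mapping on `Xᵐ` with the max-norm,
identifying the dual of `Xᵐ` with `(X*)ᵐ` equipped with the sum norm and the pairing
`⟨(xᵢ*),(xᵢ)⟩ = Σᵢ ⟨xᵢ*, xᵢ⟩`.  The norm `‖xh‖` of `xh : Fin m → X` is the max-norm
`⨆ i, ‖xh i‖` (the `Pi` sup-norm). -/
theorem dualityMap_pi (xh : Fin m → X) (p : Fin m → StrongDual ℝ X) :
    ((∑ i, ‖p i‖ = 1) ∧ (∑ i, p i (xh i)) = ‖xh‖) ↔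
      (∑ i, ‖p i‖ = 1) ∧ ∀ i, p i = 0 ∨
        (‖xh i‖ = ‖xh‖ ∧ ∃ u ∈ dualityMap (xh i), p i = ‖p i‖ • u) := by
  refine and_congr_right fun hs => ?_
  calc (∑ i, p i (xh i)) = ‖xh‖ ↔ ∑ i, p i (xh i) = (∑ i, ‖p i‖) * ‖xh‖ := by
        rw [hs, one_mul]
    _ ↔ ∀ i, p i (xh i) = ‖p i‖ * ‖xh‖ := sum_apply_eq_sum_opNorm_mul_iff p xh
    _ ↔ _ := forall_congr' fun i =>
        (p i).apply_eq_opNorm_mul_iff (norm_le_pi_norm xh i)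
end

section
/- Let F : X ⇉ Y be a set-valued mapping between normed spaces, (x̄, ȳ) ∈ gph F, and set Ω₁ = gph F, Ω₂ = X × {ȳ} in X × Y (with max-norm). If F is metrically [q]-subregular at (x̄, ȳ) with constant γ, i.e., γ·d(x, F⁻¹(ȳ)) ≤ d(ȳ, F(x))^q near x̄, then the pair {Ω₁, Ω₂} is metrically [q]-subregular at (x̄, ȳ): there exist γ', δ > 0 such that γ'·d((x,y), Ω₁ ∩ Ω₂) ≤ max(d((x,y), Ω₁), d((x,y), Ω₂))^q for all (x,y) ∈ B_δ(x̄, ȳ); moreover one can take any γ' < γ/(γ + 2^q). -/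
/-!
Let `S = F⁻¹(y₀)`, `a = d((x, y), gph F)` and `b = ‖y - y₀‖ = d((x, y), X × {y₀})`.
A point `(x', y')` of the graph at distance `t` from `(x, y)` satisfies `‖y₀ - y'‖ ≤ b + t`,
so subregularity of `F` at `x'` gives `d(x, S) ≤ t + γ⁻¹ (b + t)^q`; letting `t ↓ a` yields
`d(x, S) ≤ a + γ⁻¹ (a + b)^q ≤ (1 + 2^q / γ) max(a, b)^q`, using `m ≤ m^q` for `0 ≤ m ≤ 1`.
Since `gph F ∩ (X × {y₀}) = S × {y₀}`, its distance from `(x, y)` is at most `max(d(x, S), b)`.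
-/

open Metric Set

section PseudoMetric

variable {α β : Type*} [PseudoMetricSpace α] [PseudoMetricSpace β]

theorem Metric.le_apply_infDist_of_forall_dist_lt {s : Set α} {p : α} (hs : s.Nonempty)
    {g : ℝ → ℝ} (hg : ContinuousAt g (infDist p s)) {c r : ℝ} (hr : 0 < r)
    (h : ∀ p' ∈ s, dist p p' < infDist p s + r → c ≤ g (dist p p')) :
    c ≤ g (infDist p s) := by
  by_contra! hlt
  obtain ⟨η, hη, hgη⟩ := Metric.eventually_nhds_iff.1 (hg.eventually (gt_mem_nhds hlt))
  obtain ⟨p', hp's, hp'⟩ :=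
    (infDist_lt_iff hs).1 (lt_add_of_pos_right (infDist p s) (lt_min hη hr))
  have hclose : dist (dist p p') (infDist p s) < η := by
    rw [Real.dist_eq, abs_lt]
    constructor <;> linarith [infDist_le_dist_of_mem hp's (x := p), min_le_left η r]
  exact (hgη hclose).not_ge (h p' hp's (by linarith [min_le_right η r]))

theorem Metric.le_dist_rpow_of_ofReal_le_infEDist_rpow {s : Set α} {y y' : α} (hy' : y' ∈ s)
    {a q : ℝ} (hq : 0 ≤ q) (h : ENNReal.ofReal a ≤ infEDist y s ^ q) : a ≤ dist y y' ^ q := by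
  have hle : infEDist y s ^ q ≤ ENNReal.ofReal (dist y y' ^ q) := by
    rw [← ENNReal.ofReal_rpow_of_nonneg dist_nonneg hq, ← edist_dist]
    exact ENNReal.rpow_le_rpow (infEDist_le_edist_of_mem hy') hq
  exact (ENNReal.ofReal_le_ofReal_iff (by positivity)).1 (h.trans hle)

theorem Prod.infDist_setOf_snd_eq (x : α) (y b : β) :
    infDist (x, y) {p : α × β | p.2 = b} = dist y b := by
  have hb : ((x, b) : α × β) ∈ {p : α × β | p.2 = b} := rfl
  refine le_antisymm ?_ ((le_infDist ⟨_, hb⟩).2 ?_)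
  · simpa [Prod.dist_eq] using infDist_le_dist_of_mem (x := (x, y)) hb
  · rintro ⟨_, y'⟩ rfl
    exact le_max_right _ _

theorem Prod.infDist_prod_singleton_le {s : Set α} (hs : s.Nonempty) (x : α) (y b : β) :
    infDist (x, y) (s ×ˢ {b}) ≤ max (infDist x s) (dist y b) :=
  le_apply_infDist_of_forall_dist_lt (g := fun t => max t (dist y b)) hs
    (continuous_id.max continuous_const).continuousAt one_pos
    fun _ hx' _ => infDist_le_dist_of_mem (mk_mem_prod hx' (mem_singleton b))

theorem infDist_preimage_le_of_subregular {F : α → Set β} {x₀ : α} {y₀ : β} {γ δ q : ℝ}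
    (hγ : 0 < γ) (hq : 0 < q)
    (hF : ∀ x ∈ closedBall x₀ δ,
      ENNReal.ofReal (γ * infDist x {x' | y₀ ∈ F x'}) ≤ infEDist y₀ (F x) ^ q)
    (hgraph : {p : α × β | p.2 ∈ F p.1}.Nonempty) {x : α} {y : β}
    (hx : dist x x₀ + infDist (x, y) {p : α × β | p.2 ∈ F p.1} < δ) :
    infDist x {x' | y₀ ∈ F x'} ≤ infDist (x, y) {p : α × β | p.2 ∈ F p.1}
      + γ⁻¹ * (dist y y₀ + infDist (x, y) {p : α × β | p.2 ∈ F p.1}) ^ q := by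
  have hcont : ContinuousAt (fun t => t + γ⁻¹ * (dist y y₀ + t) ^ q)
      (infDist (x, y) {p : α × β | p.2 ∈ F p.1}) :=
    continuousAt_id.add <| continuousAt_const.mul <|
      (Real.continuousAt_rpow_const _ _ (Or.inr hq.le)).comp (continuousAt_const.add continuousAt_id)
  refine le_apply_infDist_of_forall_dist_lt hgraph hcont (sub_pos.2 hx) ?_
  rintro ⟨x', y'⟩ hy' hlt
  set t := dist (x, y) (x', y')
  have hxx' : dist x x' ≤ t := le_max_left _ _
  have hyy' : dist y y' ≤ t := le_max_right _ _
  have hx' : x' ∈ closedBall x₀ δ := by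
    rw [mem_closedBall]
    linarith [dist_triangle_left x' x₀ x]
  have hreg : γ * infDist x' {x' | y₀ ∈ F x'} ≤ dist y₀ y' ^ q :=
    le_dist_rpow_of_ofReal_le_infEDist_rpow (show y' ∈ F x' from hy') hq.le (hF x' hx')
  have hy₀y' : dist y₀ y' ≤ dist y y₀ + t := by linarith [dist_triangle_left y₀ y' y]
  calc infDist x {x' | y₀ ∈ F x'} ≤ infDist x' {x' | y₀ ∈ F x'} + dist x x' :=
        infDist_le_infDist_add_dist
    _ ≤ γ⁻¹ * dist y₀ y' ^ q + t := by
        gcongr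
        rwa [le_inv_mul_iff₀ hγ]
    _ ≤ t + γ⁻¹ * (dist y y₀ + t) ^ q := by
        rw [add_comm]
        gcongr

end PseudoMetric

theorem setOf_mem_graph_inter_setOf_snd_eq {α β : Type*} (F : α → Set β) (b : β) :
    {p : α × β | p.2 ∈ F p.1} ∩ {p | p.2 = b} = {x | b ∈ F x} ×ˢ {b} := by
  ext ⟨x, y⟩
  constructor
  · rintro ⟨hy, rfl⟩
    exact ⟨hy, rfl⟩
  · rintro ⟨hb, rfl⟩
    exact ⟨hb, rfl⟩

theorem mul_max_add_inv_mul_add_rpow_le {a b γ γ' q : ℝ} (ha : 0 ≤ a) (hb : 0 ≤ b)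
    (hab : max a b ≤ 1) (hγ : 0 < γ) (hγ' : 0 < γ') (hγ'γ : γ' < γ / (γ + 2 ^ q))
    (hq0 : 0 < q) (hq1 : q ≤ 1) :
    γ' * max (a + γ⁻¹ * (b + a) ^ q) b ≤ max a b ^ q := by
  set m := max a b
  have hm : 0 ≤ m := ha.trans (le_max_left a b)
  have hmq : m ≤ m ^ q := Real.self_le_rpow_of_le_one hm hab hq1
  have hsum : (b + a) ^ q ≤ 2 ^ q * m ^ q := by
    rw [← Real.mul_rpow zero_le_two hm]
    gcongr
    linarith [le_max_left a b, le_max_right a b]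
  have hmax : max (a + γ⁻¹ * (b + a) ^ q) b ≤ (1 + γ⁻¹ * 2 ^ q) * m ^ q := by
    have : γ⁻¹ * (b + a) ^ q ≤ γ⁻¹ * (2 ^ q * m ^ q) := by gcongr
    have hc : 0 ≤ γ⁻¹ * (2 ^ q * m ^ q) := by positivity
    refine max_le ?_ ?_ <;> linarith [le_max_left a b, le_max_right a b]
  have hγ'_mul : γ' * (1 + γ⁻¹ * 2 ^ q) ≤ 1 := by
    rw [lt_div_iff₀ (by positivity)] at hγ'γ
    rw [show γ' * (1 + γ⁻¹ * 2 ^ q) = γ' * (γ + 2 ^ q) / γ by field_simp, div_le_one hγ]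
    exact hγ'γ.le
  calc γ' * max (a + γ⁻¹ * (b + a) ^ q) b ≤ γ' * ((1 + γ⁻¹ * 2 ^ q) * m ^ q) := by gcongr
    _ ≤ m ^ q := by
        rw [← mul_assoc]
        exact mul_le_of_le_one_left (by positivity) hγ'_mul

variable {X Y : Type*} [NormedAddCommGroup X] [NormedSpace ℝ X]
  [NormedAddCommGroup Y] [NormedSpace ℝ Y]

/-- If `F` is metrically `[q]`-subregular at `(x₀, y₀)` with constant `γ`, then the pair
`Ω₁ = gph F`, `Ω₂ = X × {y₀}` is metrically `[q]`-subregular at `(x₀, y₀)`, with any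
constant `γ' < γ/(γ + 2^q)`.  Here `X × Y` carries the max-norm, and the distance
`d(y₀, F x)` (possibly to the empty set) is taken in `ℝ≥0∞`. -/
theorem pair_subReg_of_map_subReg (q : ℝ) (hq0 : 0 < q) (hq1 : q ≤ 1)
    (F : X → Set Y) (x₀ : X) (y₀ : Y) (hxy : y₀ ∈ F x₀)
    (γ : ℝ) (hγ : 0 < γ)
    (hF : ∃ δ > (0:ℝ), ∀ x ∈ Metric.closedBall x₀ δ,
      ENNReal.ofReal (γ * Metric.infDist x {x' : X | y₀ ∈ F x'})
        ≤ (EMetric.infEdist y₀ (F x)) ^ q) :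
    ∀ γ' : ℝ, 0 < γ' → γ' < γ / (γ + 2 ^ q) →
      ∃ δ > (0:ℝ), ∀ p ∈ Metric.closedBall (x₀, y₀) δ,
        γ' * Metric.infDist p ({p' : X × Y | p'.2 ∈ F p'.1} ∩ {p' : X × Y | p'.2 = y₀})
          ≤ (max (Metric.infDist p {p' : X × Y | p'.2 ∈ F p'.1})
                 (Metric.infDist p {p' : X × Y | p'.2 = y₀})) ^ q := by
  obtain ⟨δ, hδ, hF⟩ := hF
  intro γ' hγ' hγ'γ
  refine ⟨min (δ / 3) 1, by positivity, ?_⟩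
  rintro ⟨x, y⟩ hp
  have hgraph : ((x₀, y₀) : X × Y) ∈ {p : X × Y | p.2 ∈ F p.1} := hxy
  set a := infDist (x, y) {p : X × Y | p.2 ∈ F p.1}
  have ha : a ≤ min (δ / 3) 1 := (infDist_le_dist_of_mem hgraph).trans hp
  have hx : dist x x₀ ≤ min (δ / 3) 1 := (le_max_left _ _).trans hp
  have hy : dist y y₀ ≤ min (δ / 3) 1 := (le_max_right _ _).trans hp
  have hS := infDist_preimage_le_of_subregular hγ hq0 hF ⟨_, hgraph⟩
    (by linarith [min_le_left (δ / 3) 1])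
  rw [setOf_mem_graph_inter_setOf_snd_eq, Prod.infDist_setOf_snd_eq]
  calc γ' * infDist (x, y) ({x' | y₀ ∈ F x'} ×ˢ {y₀})
      ≤ γ' * max (a + γ⁻¹ * (dist y y₀ + a) ^ q) (dist y y₀) := by
        gcongr
        exact (Prod.infDist_prod_singleton_le ⟨x₀, hxy⟩ x y y₀).trans (max_le_max_right _ hS)
    _ ≤ max a (dist y y₀) ^ q :=
        mul_max_add_inv_mul_add_rpow_le infDist_nonneg dist_nonneg
          (max_le (ha.trans (min_le_right _ _)) (hy.trans (min_le_right _ _))) hγ hγ' hγ'γ hq0 hq1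
end

section
/- Let F : X ⇉ Y be a set-valued mapping between normed spaces, (x̄, ȳ) ∈ gph F, Ω₁ = gph F, Ω₂ = X × {ȳ} in X × Y (max-norm). If the pair {Ω₁, Ω₂} is metrically [q]-semiregular at (x̄, ȳ) with constant α (i.e., α·d((x̄,ȳ), (Ω₁ − z₁) ∩ (Ω₂ − z₂)) ≤ max(‖z₁‖,‖z₂‖)^q for all z₁, z₂ in a small ball around 0 of X × Y), then F is metrically [q]-semiregular at (x̄, ȳ): there exist δ > 0 such that 2^q α · d(x̄, F⁻¹(y)) ≤ ‖y − ȳ‖^q for all y ∈ B_δ(ȳ). -/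
/-
Translate the graph vertically by `z` and the level set `X × {y₀}` by `-z`, where `2z = y - y₀`.
A point `p` in the intersection of the two translates has `p.2 = y₀ + z`, hence `y ∈ F p.1`;
so `d(x₀, F⁻¹(y))` is at most the distance from `(x₀, y₀)` to this intersection, which the
semiregularity of the pair bounds by `(‖y - y₀‖ / 2)^q / α`.
-/

open Metric

theorem LipschitzWith.infEDist_le_of_mapsTo {α β : Type*} [PseudoEMetricSpace α]
    [PseudoEMetricSpace β] {f : α → β} (hf : LipschitzWith 1 f) {s : Set α} {t : Set β}
    (hst : Set.MapsTo f s t) (x : α) : infEDist (f x) t ≤ infEDist x s :=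
  le_infEDist.2 fun y hy => calc
    infEDist (f x) t ≤ edist (f x) (f y) := infEDist_le_edist_of_mem (hst hy)
    _ ≤ edist x y := by simpa using hf x y

theorem mem_of_translate_graph_inter_translate_level {α β : Type*} [AddZeroClass α]
    [AddGroup β] {F : α → Set β} {y₀ u v : β} {p : α × β}
    (h₁ : p + (0, u) ∈ {p' : α × β | p'.2 ∈ F p'.1})
    (h₂ : p + (0, v) ∈ {p' : α × β | p'.2 = y₀}) : y₀ - v + u ∈ F p.1 := by
  simp only [Set.mem_ofPred_eq, Prod.fst_add, Prod.snd_add, add_zero] at h₁ h₂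
  rwa [← h₂, add_sub_cancel_right]

variable {X Y : Type*} [NormedAddCommGroup X] [NormedSpace ℝ X]
  [NormedAddCommGroup Y] [NormedSpace ℝ Y]

theorem map_semiReg_of_pair_semiReg_general (q : ℝ)
    (F : X → Set Y) (x₀ : X) (y₀ : Y)
    (α : ℝ)
    (hpair : ∃ δ > (0:ℝ), ∀ z₁ z₂ : X × Y, ‖z₁‖ ≤ δ → ‖z₂‖ ≤ δ →
      ENNReal.ofReal α * EMetric.infEdist ((x₀, y₀) : X × Y)
          {p : X × Y | (p + z₁ ∈ {p' : X × Y | p'.2 ∈ F p'.1}) ∧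
                       (p + z₂ ∈ {p' : X × Y | p'.2 = y₀})}
        ≤ ENNReal.ofReal ((max ‖z₁‖ ‖z₂‖) ^ q)) :
    ∃ δ > (0:ℝ), ∀ y ∈ Metric.closedBall y₀ δ,
      ENNReal.ofReal (2 ^ q * α) * EMetric.infEdist x₀ {x : X | y ∈ F x}
        ≤ ENNReal.ofReal (‖y - y₀‖ ^ q) := by
  obtain ⟨δ, hδ, hpair⟩ := hpair
  refine ⟨δ, hδ, fun y hy => ?_⟩
  set z : Y := (2⁻¹ : ℝ) • (y - y₀)
  have hz : ‖z‖ = ‖y - y₀‖ / 2 := by simp [z, norm_smul, div_eq_inv_mul]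
  have hzδ : ‖z‖ ≤ δ := by
    linarith [norm_nonneg (y - y₀), mem_closedBall_iff_norm.1 hy]
  have hnorm : ‖((0 : X), z)‖ = ‖z‖ ∧ ‖((0 : X), -z)‖ = ‖z‖ := by simp
  have hsemireg := hpair (0, z) (0, -z) (hnorm.1.trans_le hzδ) (hnorm.2.trans_le hzδ)
  rw [hnorm.1, hnorm.2, max_self] at hsemireg
  have hy_eq : y₀ - -z + z = y := by
    simp only [z, sub_neg_eq_add, add_assoc, ← two_smul ℝ, smul_smul]
    norm_num
  have hproj : infEDist x₀ {x | y ∈ F x} ≤ infEDist (x₀, y₀)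
      {p : X × Y | p + (0, z) ∈ {p' : X × Y | p'.2 ∈ F p'.1} ∧ p + (0, -z) ∈ {p' | p'.2 = y₀}} :=
    LipschitzWith.prod_fst.infEDist_le_of_mapsTo
      (fun _ hp => hy_eq ▸ mem_of_translate_graph_inter_translate_level hp.1 hp.2) (x₀, y₀)
  have hscale : 2 ^ q * ‖z‖ ^ q = ‖y - y₀‖ ^ q := by
    rw [← Real.mul_rpow zero_le_two (norm_nonneg z), hz, mul_div_cancel₀ _ two_ne_zero]
  have h2q : (0 : ℝ) ≤ 2 ^ q := by positivity
  calc ENNReal.ofReal (2 ^ q * α) * EMetric.infEdist x₀ {x : X | y ∈ F x}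
      ≤ ENNReal.ofReal (2 ^ q) * (ENNReal.ofReal α * EMetric.infEdist (x₀, y₀) _) := by
        rw [ENNReal.ofReal_mul h2q, mul_assoc]
        gcongr
        exact hproj
    _ ≤ ENNReal.ofReal (2 ^ q) * ENNReal.ofReal (‖z‖ ^ q) := by gcongr
    _ = ENNReal.ofReal (‖y - y₀‖ ^ q) := by rw [← ENNReal.ofReal_mul h2q, hscale]

/-- If the pair `Ω₁ = gph F`, `Ω₂ = X × {y₀}` is metrically `[q]`-semiregular at
`(x₀, y₀)` with constant `α`, then `F` is metrically `[q]`-semiregular at `(x₀, y₀)`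
with constant `2^q·α`.  Here `X × Y` carries the max-norm, and distances to possibly
empty sets are taken in `ℝ≥0∞`. -/
theorem map_semiReg_of_pair_semiReg (q : ℝ) (hq0 : 0 < q) (hq1 : q ≤ 1)
    (F : X → Set Y) (x₀ : X) (y₀ : Y) (hxy : y₀ ∈ F x₀)
    (α : ℝ) (hα : 0 < α)
    (hpair : ∃ δ > (0:ℝ), ∀ z₁ z₂ : X × Y, ‖z₁‖ ≤ δ → ‖z₂‖ ≤ δ →
      ENNReal.ofReal α * EMetric.infEdist ((x₀, y₀) : X × Y)
          {p : X × Y | (p + z₁ ∈ {p' : X × Y | p'.2 ∈ F p'.1}) ∧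
                       (p + z₂ ∈ {p' : X × Y | p'.2 = y₀})}
        ≤ ENNReal.ofReal ((max ‖z₁‖ ‖z₂‖) ^ q)) :
    ∃ δ > (0:ℝ), ∀ y ∈ Metric.closedBall y₀ δ,
      ENNReal.ofReal (2 ^ q * α) * EMetric.infEdist x₀ {x : X | y ∈ F x}
        ≤ ENNReal.ofReal (‖y - y₀‖ ^ q) :=
  map_semiReg_of_pair_semiReg_general q F x₀ y₀ α hpair
end
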